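/- arXiv:2304.00796 — 3 statements merged into one kernel-verified Lean document; each statement's English description precedes it below -/
import Mathlib

section
/- If M is a lattice path matroid and N is a minor of M, then N is a lattice path matroid; that is, the class of lattice path matroids is closed under minors. -/
open Set Matroid

variable {α : Type*}

/-- `N` is a transversal presentation of the matroid `M`: the independent sets of `M` are
exactly the partial transversals of the family `N`, i.e. the subsets of the ground set
admitting an injection `φ` into the index set with `x ∈ N (φ x)` for all `x`. -/
def IsTransversalPresentation (M : Matroid α) {r : ℕ} (N : Fin r → Set α) : Prop :=
  (∀ i, N i ⊆ M.E) ∧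
    ∀ I : Set α, M.Indep I ↔
      I ⊆ M.E ∧ ∃ φ : I → Fin r, Function.Injective φ ∧ ∀ x : I, (x : α) ∈ N (φ x)

/-- A matroid is bicircular if it has a transversal presentation in which every set of the
presentation has at most two elements. -/
def Bicircular (M : Matroid α) : Prop :=
  ∃ (r : ℕ) (N : Fin r → Set α), IsTransversalPresentation M N ∧ ∀ i, (N i).encard ≤ 2

/-- `M` is a matroid on ground set `{1, …, m + r}` with a standard (lattice path)
presentation consisting of the intervals `[l i, u i]`, where the lower endpoints and the
upper endpoints each form strictly increasing chains. -/
def IsStandardPresentation (M : Matroid ℕ) (m : ℕ) {r : ℕ} (l u : Fin r → ℕ) : Prop :=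
  M.E = Set.Icc 1 (m + r) ∧ StrictMono l ∧ StrictMono u ∧
    (∀ i, 1 ≤ l i ∧ l i ≤ u i ∧ u i ≤ m + r) ∧
    IsTransversalPresentation M (fun i => Set.Icc (l i) (u i))

/-- A matroid is a lattice path matroid if it is isomorphic (via a bijection `g` of ground
sets) to a transversal matroid on `{1, …, m + r}` whose presentation consists of intervals
`[l i, u i]` with both endpoint sequences strictly increasing. -/
def LatticePath (M : Matroid α) : Prop :=
  ∃ (r m : ℕ) (g : ℕ → α) (l u : Fin r → ℕ),
    Set.InjOn g (Set.Icc 1 (m + r)) ∧ g '' Set.Icc 1 (m + r) = M.E ∧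
    StrictMono l ∧ StrictMono u ∧ (∀ i, 1 ≤ l i ∧ l i ≤ u i ∧ u i ≤ m + r) ∧
    IsTransversalPresentation M (fun i => g '' Set.Icc (l i) (u i))

/-- The class of matroids that are both bicircular and lattice path. -/
def BicircLP (M : Matroid α) : Prop := Bicircular M ∧ LatticePath M

/-- Deletion of the set `D` from the matroid `M`. -/
def MDel (M : Matroid α) (D : Set α) : Matroid α := M ↾ (M.E \ D)

/-- Contraction of the set `C` in the matroid `M`. -/
def MCon (M : Matroid α) (C : Set α) : Matroid α := (M✶ ↾ (M.E \ C))✶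

/-- `N` is a minor of `M`: it is obtained from `M` by contracting a set and deleting a set. -/
def IsMinorOf (N M : Matroid α) : Prop :=
  ∃ C D : Set α, C ⊆ M.E ∧ D ⊆ M.E ∧ Disjoint C D ∧ N = MDel (MCon M C) D

/-- `N` is a proper minor of `M`: a minor on a proper subset of the ground set. -/
def IsProperMinorOf (N M : Matroid α) : Prop := IsMinorOf N M ∧ N.E ⊂ M.E

/-- `M` is an excluded minor for the class `𝒞`: `M` is not in `𝒞`, but every proper minor
of `M` is in `𝒞`. -/
def IsExcludedMinor (𝒞 : Matroid α → Prop) (M : Matroid α) : Prop :=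
  ¬ 𝒞 M ∧ ∀ N : Matroid α, IsProperMinorOf N M → 𝒞 N

/-- The rank of the set `X` in `M`: the supremum of the cardinalities of independent
subsets of `X`. -/
noncomputable def eRk (M : Matroid α) (X : Set α) : ℕ∞ :=
  ⨆ I : {I : Set α // M.Indep I ∧ I ⊆ X}, (I : Set α).encard

/-- The rank of the matroid `M`. -/
noncomputable def eRank (M : Matroid α) : ℕ∞ := _root_.eRk M M.E

/-- `M` is vertically 3-connected: it has no vertical `k`-separation for `k < 3`, i.e. no
partition `(A, B)` of the ground set with `|A| ≥ k`, `|B| ≥ k`, `r A ≥ k`, `r B ≥ k` and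
`r A + r B - r M < k`. -/
def VerticallyThreeConnected (M : Matroid α) : Prop :=
  ∀ k : ℕ, 0 < k → k < 3 → ∀ A B : Set α, A ∪ B = M.E → Disjoint A B →
    ¬ ((k : ℕ∞) ≤ A.encard ∧ (k : ℕ∞) ≤ B.encard ∧ (k : ℕ∞) ≤ _root_.eRk M A ∧
        (k : ℕ∞) ≤ _root_.eRk M B ∧ _root_.eRk M A + _root_.eRk M B < _root_.eRank M + (k : ℕ∞))

/-- A circuit of a matroid: a minimal dependent set. -/
def IsCircuit (M : Matroid α) (C : Set α) : Prop :=
  M.Dep C ∧ ∀ D : Set α, D ⊂ C → M.Indep D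

/-- `P` is a parallel class of `M`: a maximal set of pairwise parallel non-loop elements. -/
def IsParallelClass (M : Matroid α) (P : Set α) : Prop :=
  P.Nonempty ∧ P ⊆ M.E ∧ (∀ a ∈ P, M.Indep {a}) ∧
    (∀ a ∈ P, ∀ b ∈ P, a ≠ b → ¬ M.Indep {a, b}) ∧
    ∀ c ∈ M.E, M.Indep {c} → (∀ a ∈ P, a ≠ c → ¬ M.Indep {a, c}) → c ∈ P

/-- `M` is isomorphic to the uniform matroid `U_{a,b}`: its ground set has `b` elements and
its independent sets are the subsets of the ground set with at most `a` elements. -/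
def IsUnifIso (a b : ℕ) (M : Matroid α) : Prop :=
  M.E.encard = (b : ℕ∞) ∧ ∀ I : Set α, M.Indep I ↔ I ⊆ M.E ∧ I.encard ≤ (a : ℕ∞)

/-- `M` is the direct sum of `M₁` and `M₂` (which have disjoint ground sets). -/
def IsDirectSumOf (M M₁ M₂ : Matroid α) : Prop :=
  Disjoint M₁.E M₂.E ∧ M.E = M₁.E ∪ M₂.E ∧
    ∀ I : Set α, M.Indep I ↔ I ⊆ M.E ∧ M₁.Indep (I ∩ M₁.E) ∧ M₂.Indep (I ∩ M₂.E)

/-- `M` is the truncation `T_n(M₀)` to rank `n` of the matroid `M₀` (of rank at least `n`):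
its independent sets are the independent sets of `M₀` with at most `n` elements. -/
def IsTruncationOf (n : ℕ) (M₀ M : Matroid α) : Prop :=
  (n : ℕ∞) ≤ _root_.eRank M₀ ∧ M.E = M₀.E ∧
    ∀ I : Set α, M.Indep I ↔ M₀.Indep I ∧ I.encard ≤ (n : ℕ∞)

/-- `M` is the free extension `M₀ + x` of `M₀` by the new element `x`: its independent sets
are the independent sets `I` of `M₀`, together with the sets `I ∪ {x}` for `I` independent
in `M₀` with `|I| ≤ r(M₀) - 1`. -/
def IsFreeExtOf (M₀ M : Matroid α) (x : α) : Prop :=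
  x ∉ M₀.E ∧ M.E = insert x M₀.E ∧
    ∀ I : Set α, M.Indep I ↔
      ((x ∉ I ∧ M₀.Indep I) ∨
        (x ∈ I ∧ M₀.Indep (I \ {x}) ∧ (I \ {x}).encard + 1 ≤ _root_.eRank M₀))

/-- `M` is isomorphic to `T_3(U_{1,2} ⊕ U_{3,5})`. -/
def IsT3U12U35 (M : Matroid α) : Prop :=
  ∃ M₁ M₂ M₀ : Matroid α, IsUnifIso 1 2 M₁ ∧ IsUnifIso 3 5 M₂ ∧ IsDirectSumOf M₀ M₁ M₂ ∧
    IsTruncationOf 3 M₀ M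

/-- `M` is isomorphic to `T_3(U_{1,2} ⊕ U_{1,2} ⊕ U_{3,3})`. -/
def IsT3U12U12U33 (M : Matroid α) : Prop :=
  ∃ M₁ M₂ M₃ M₁₂ M₀ : Matroid α, IsUnifIso 1 2 M₁ ∧ IsUnifIso 1 2 M₂ ∧ IsUnifIso 3 3 M₃ ∧
    IsDirectSumOf M₁₂ M₁ M₂ ∧ IsDirectSumOf M₀ M₁₂ M₃ ∧ IsTruncationOf 3 M₀ M

/-- `M` is isomorphic to `T_4(U_{1,2} ⊕ U_{4,5})`. -/
def IsT4U12U45 (M : Matroid α) : Prop :=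
  ∃ M₁ M₂ M₀ : Matroid α, IsUnifIso 1 2 M₁ ∧ IsUnifIso 4 5 M₂ ∧ IsDirectSumOf M₀ M₁ M₂ ∧
    IsTruncationOf 4 M₀ M

/-- `M` is isomorphic to `T_4(U_{3,4} ⊕ U_{3,3})`. -/
def IsT4U34U33 (M : Matroid α) : Prop :=
  ∃ M₁ M₂ M₀ : Matroid α, IsUnifIso 3 4 M₁ ∧ IsUnifIso 3 3 M₂ ∧ IsDirectSumOf M₀ M₁ M₂ ∧
    IsTruncationOf 4 M₀ M

/-- `M` is isomorphic to `P_n = T_n(U_{n-1,n} ⊕ U_{n-1,n})`. -/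
def IsP (n : ℕ) (M : Matroid α) : Prop :=
  ∃ M₁ M₂ M₀ : Matroid α, IsUnifIso (n - 1) n M₁ ∧ IsUnifIso (n - 1) n M₂ ∧
    IsDirectSumOf M₀ M₁ M₂ ∧ IsTruncationOf n M₀ M

/-- `M` is isomorphic to `P_n' = (P_{n-1}✶ + e)✶`, the free coextension of `P_{n-1}`. -/
def IsP' (n : ℕ) (M : Matroid α) : Prop :=
  ∃ (N : Matroid α) (e : α), IsP (n - 1) N ∧ IsFreeExtOf N✶ M✶ e

/-- `M` is isomorphic to `A_n = P_n' + x`. -/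
def IsA (n : ℕ) (M : Matroid α) : Prop :=
  ∃ (N : Matroid α) (x : α), IsP' n N ∧ IsFreeExtOf N M x

/-- `M` is isomorphic to `B_{n,k} = T_n(U_{n-1,n} ⊕ U_{n-1,n} ⊕ U_{k-1,k})`. -/
def IsB (n k : ℕ) (M : Matroid α) : Prop :=
  ∃ M₁ M₂ M₃ M₁₂ M₀ : Matroid α, IsUnifIso (n - 1) n M₁ ∧ IsUnifIso (n - 1) n M₂ ∧
    IsUnifIso (k - 1) k M₃ ∧ IsDirectSumOf M₁₂ M₁ M₂ ∧ IsDirectSumOf M₀ M₁₂ M₃ ∧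
    IsTruncationOf n M₀ M

/-- `M` is isomorphic to `C_{n+k,k} = B_{n,k}✶`. -/
def IsC (n k : ℕ) (M : Matroid α) : Prop := IsB n k M✶

/-- `M` is isomorphic to `D_n = (P_{n-1} ⊕ U_{1,1}) + x`. -/
def IsD (n : ℕ) (M : Matroid α) : Prop :=
  ∃ (P U S : Matroid α) (x : α), IsP (n - 1) P ∧ IsUnifIso 1 1 U ∧ IsDirectSumOf S P U ∧
    IsFreeExtOf S M x

/-- `M` is isomorphic to `E_n = D_n✶`. -/
def IsE (n : ℕ) (M : Matroid α) : Prop := IsD n M✶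

/-- `M` is isomorphic to the rank-3 whirl `𝒲³`, the transversal matroid on `{1, …, 6}` with
presentation `({1,3,4}, {1,2,5}, {2,3,6})`. -/
def IsWhirl3 (M : Matroid α) : Prop :=
  ∃ g : ℕ → α, Set.InjOn g (Set.Icc 1 6) ∧ g '' Set.Icc 1 6 = M.E ∧
    IsTransversalPresentation M ![g '' {1, 3, 4}, g '' {1, 2, 5}, g '' {2, 3, 6}]

/-- `M` is isomorphic to `R₃`, the transversal matroid on `{1, …, 7}` with presentation
`({1,2}, {1,3,4,5}, {2,3,6,7})`. -/
def IsR3 (M : Matroid α) : Prop :=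
  ∃ g : ℕ → α, Set.InjOn g (Set.Icc 1 7) ∧ g '' Set.Icc 1 7 = M.E ∧
    IsTransversalPresentation M ![g '' {1, 2}, g '' {1, 3, 4, 5}, g '' {2, 3, 6, 7}]

/-- `M` is isomorphic to `R₄`, the transversal matroid on `{1, …, 7}` with presentation
`({1,2}, {1,3,4,5}, {2,3,6,7}, {6,7})`. -/
def IsR4 (M : Matroid α) : Prop :=
  ∃ g : ℕ → α, Set.InjOn g (Set.Icc 1 7) ∧ g '' Set.Icc 1 7 = M.E ∧
    IsTransversalPresentation M
      ![g '' {1, 2}, g '' {1, 3, 4, 5}, g '' {2, 3, 6, 7}, g '' {6, 7}]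

/-- `M` is isomorphic to the rank-3 wheel `𝒲₃`, the cycle matroid of `K₄`: the elements
correspond bijectively to the edges of the complete graph on four vertices, and a set is
independent if and only if the corresponding edge set is acyclic. -/
def IsWheel3 (M : Matroid α) : Prop :=
  ∃ f : α → Sym2 (Fin 4),
    Set.InjOn f M.E ∧ (∀ x ∈ M.E, ¬ (f x).IsDiag) ∧
    (∀ p : Sym2 (Fin 4), ¬ p.IsDiag → ∃ x ∈ M.E, f x = p) ∧
    ∀ I : Set α, M.Indep I ↔ I ⊆ M.E ∧ (SimpleGraph.fromEdgeSet (f '' I)).IsAcyclic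

/-!
Identify a set `T ⊆ {1, …, n}` with the lattice path taking its north steps at the elements of
`T`, and let `L = {l i}` and `U = {u i}`. A path between `U` and `L` is a transversal (its `k`-th
element lies in the `k`-th interval); conversely, Hall's condition for a partial transversal `X`
on the windows `(q, p]` guarantees that the lowest path above `U` with a north step at every
element of `X` stays below `L`. So the bases are the paths between `U` and `L`, and the class is
closed under duality because complementation in `{1, …, n}` reverses the order of paths. The
bases avoiding an element `a` that is not a coloop are the paths between `U` and `L` with an east
step at `a`; moving the north step of `L` at `a` to the end of its run and that of `U` to the
start of its run, then renumbering `{1, …, n} \ {a}`, presents them as a lattice path matroid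
again. Deleting a coloop is contracting it, and contraction is dual to deletion.
-/

lemma Matroid.isBase_iff_of_indep_iff {M : Matroid α} {𝔅 : Set (Set α)}
    (h𝔅 : IsAntichain (· ⊆ ·) 𝔅) (hI : ∀ I, M.Indep I ↔ ∃ B ∈ 𝔅, I ⊆ B) (B : Set α) :
    M.IsBase B ↔ B ∈ 𝔅 := by
  rw [isBase_iff_maximal_indep]
  constructor
  · intro hB
    obtain ⟨B', hB', hBB'⟩ := (hI B).1 hB.prop
    rwa [hB.eq_of_subset ((hI B').2 ⟨B', hB', subset_rfl⟩) hBB']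
  · intro hB
    refine ⟨(hI B).2 ⟨B, hB, subset_rfl⟩, fun J hJ hBJ => ?_⟩
    obtain ⟨B', hB', hJB'⟩ := (hI J).1 hJ
    rw [h𝔅.eq hB hB' (hBJ.trans hJB')]
    exact hJB'

namespace LatticePath

open scoped Finset

/-! ### Partial transversals -/

def IsPartialTransversal {ι : Type*} (N : ι → Set α) (I : Set α) : Prop :=
  ∃ φ : I → ι, Function.Injective φ ∧ ∀ x : I, (x : α) ∈ N (φ x)

section PartialTransversal

variable {ι : Type*} {N : ι → Set α} {I : Set α}

lemma IsPartialTransversal.mono (h : IsPartialTransversal N I) {J : Set α} (hJI : J ⊆ I) :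
    IsPartialTransversal N J := by
  obtain ⟨φ, hinj, hφ⟩ := h
  exact ⟨fun x => φ (Set.inclusion hJI x), hinj.comp (Set.inclusion_injective hJI),
    fun x => hφ _⟩

lemma IsPartialTransversal.card_le [Fintype ι] (h : IsPartialTransversal N I) {S : Finset α}
    (hS : ↑S ⊆ I) (P : ι → Prop) [DecidablePred P] (hP : ∀ x ∈ S, ∀ i, x ∈ N i → P i) :
    #S ≤ #(Finset.univ.filter P) := by
  obtain ⟨φ, hinj, hφ⟩ := h
  let f : S → {i // P i} := fun x => ⟨φ ⟨x, hS x.2⟩, hP x x.2 _ (hφ _)⟩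
  have hf : Function.Injective f := fun x y hxy =>
    Subtype.ext (Subtype.mk.inj (hinj (congrArg Subtype.val hxy)))
  simpa [Fintype.card_subtype] using Fintype.card_le_of_injective f hf

lemma isPartialTransversal_image_iff {β : Type*} {g : β → α} {s X : Set β} {N : ι → Set β}
    (hg : InjOn g s) (hX : X ⊆ s) (hN : ∀ i, N i ⊆ s) :
    IsPartialTransversal (fun i => g '' N i) (g '' X) ↔ IsPartialTransversal N X := by
  let e : X ≃ g '' X := Equiv.Set.imageOfInjOn g X (hg.mono hX)
  constructor
  · rintro ⟨φ, hinj, hφ⟩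
    refine ⟨φ ∘ e, hinj.comp e.injective, fun x => ?_⟩
    obtain ⟨y, hy, hyx⟩ := hφ (e x)
    exact hg (hN _ hy) (hX x.2) hyx ▸ hy
  · rintro ⟨φ, hinj, hφ⟩
    refine ⟨φ ∘ e.symm, hinj.comp e.symm.injective, fun x => ?_⟩
    have hx : (x : α) = g (e.symm x) := congrArg Subtype.val (e.apply_symm_apply x).symm
    exact hx ▸ Set.mem_image_of_mem g (hφ (e.symm x))

end PartialTransversal

/-! ### Lattice paths -/

/-- For `S ⊆ {1, …, n}`, the height after `p` steps of the lattice path whose north steps are the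
elements of `S`. -/
def height (S : Finset ℕ) (p : ℕ) : ℕ := #{x ∈ S | x ≤ p}

def PathLE (S T : Finset ℕ) : Prop := ∀ p, height S p ≤ height T p

lemma PathLE.trans {S T W : Finset ℕ} (h₁ : PathLE S T) (h₂ : PathLE T W) : PathLE S W :=
  fun p => (h₁ p).trans (h₂ p)

lemma height_mono (S : Finset ℕ) : Monotone (height S) := fun _ _ hpq =>
  Finset.card_le_card fun x hx => by
    simp only [Finset.mem_filter] at hx ⊢
    exact ⟨hx.1, hx.2.trans hpq⟩

lemma height_le_card (S : Finset ℕ) (p : ℕ) : height S p ≤ #S :=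
  Finset.card_filter_le S _

lemma height_succ (S : Finset ℕ) (p : ℕ) :
    height S (p + 1) = height S p + if p + 1 ∈ S then 1 else 0 := by
  have : {x ∈ S | x ≤ p + 1} = {x ∈ S | x ≤ p} ∪ {x ∈ S | x = p + 1} := by
    ext x
    simp only [Finset.mem_union, Finset.mem_filter, Nat.le_succ_iff, and_or_left]
  rw [height, height, this, Finset.card_union_of_disjoint
    (Finset.disjoint_filter.2 fun _ _ _ => by omega), Finset.filter_eq' S (p + 1)]
  split_ifs <;> simp

lemma height_add_card_filter (S : Finset ℕ) {q p : ℕ} (hqp : q ≤ p) :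
    height S q + #{x ∈ S | q < x ∧ x ≤ p} = height S p := by
  have : {x ∈ S | x ≤ p} = {x ∈ S | x ≤ q} ∪ {x ∈ S | q < x ∧ x ≤ p} := by
    ext x
    simp only [Finset.mem_union, Finset.mem_filter]
    grind
  rw [height, height, this, Finset.card_union_of_disjoint
    (Finset.disjoint_filter.2 fun _ _ _ => by omega)]

lemma one_le_height {S : Finset ℕ} {t : ℕ} (ht : t ∈ S) : 1 ≤ height S t :=
  Finset.card_pos.2 ⟨t, Finset.mem_filter.2 ⟨ht, le_rfl⟩⟩

lemma height_lt_height {S : Finset ℕ} {t t' : ℕ} (ht' : t' ∈ S) (h : t < t') :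
    height S t < height S t' := by
  have h₁ := height_mono S (show t ≤ t' - 1 by omega)
  have h₂ := height_succ S (t' - 1)
  rw [Nat.sub_add_cancel (by omega), if_pos ht'] at h₂
  omega

lemma height_insert {S : Finset ℕ} {b : ℕ} (hb : b ∉ S) (p : ℕ) :
    height (insert b S) p = height S p + if b ≤ p then 1 else 0 := by
  rw [height, height, Finset.filter_insert]
  split_ifs <;> simp [Finset.card_insert_of_notMem (fun h => hb (Finset.mem_filter.1 h).1)]

lemma height_erase_add {S : Finset ℕ} {a : ℕ} (ha : a ∈ S) (p : ℕ) :
    height (S.erase a) p + (if a ≤ p then 1 else 0) = height S p := by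
  rw [← height_insert (Finset.notMem_erase a S), Finset.insert_erase ha]

lemma lt_height_image_iff {r : ℕ} {f : Fin r → ℕ} (hf : StrictMono f) (i : Fin r) (p : ℕ) :
    (i : ℕ) < height (Finset.univ.image f) p ↔ f i ≤ p := by
  rw [height, Finset.filter_image, Finset.card_image_of_injective _ hf.injective]
  constructor
  · intro hi
    by_contra! hpi
    have : Finset.univ.filter (f · ≤ p) ⊆ Finset.Iio i := fun j hj =>
      Finset.mem_Iio.2 (hf.lt_iff_lt.1 ((Finset.mem_filter.1 hj).2.trans_lt hpi))
    have := (Finset.card_le_card this).trans_eq (Fin.card_Iio i)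
    omega
  · intro hip
    have : Finset.Iic i ⊆ Finset.univ.filter (f · ≤ p) := fun j hj =>
      Finset.mem_filter.2 ⟨Finset.mem_univ j, (hf.monotone (Finset.mem_Iic.1 hj)).trans hip⟩
    have := (Fin.card_Iic i).symm.trans_le (Finset.card_le_card this)
    omega

lemma lt_height_iff_orderEmbOfFin_le {S : Finset ℕ} {k : ℕ} (h : #S = k) (i : Fin k) (p : ℕ) :
    (i : ℕ) < height S p ↔ S.orderEmbOfFin h i ≤ p := by
  conv_lhs => rw [← S.image_orderEmbOfFin_univ h]
  exact lt_height_image_iff (S.orderEmbOfFin h).strictMono i p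

section Bounded

variable {n : ℕ} {S T : Finset ℕ}

lemma coe_subset_Icc (hS : S ⊆ Finset.Icc 1 n) : (↑S : Set ℕ) ⊆ Icc 1 n := by
  simpa using Finset.coe_subset.2 hS

lemma height_zero (hS : S ⊆ Finset.Icc 1 n) : height S 0 = 0 := by
  refine Finset.card_eq_zero.2 (Finset.filter_eq_empty_iff.2 fun x hx => ?_)
  have := (Finset.mem_Icc.1 (hS hx)).1
  omega

lemma height_of_le (hS : S ⊆ Finset.Icc 1 n) {p : ℕ} (hp : n ≤ p) : height S p = #S :=
  congrArg Finset.card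
    (Finset.filter_true_of_mem fun _ hx => (Finset.mem_Icc.1 (hS hx)).2.trans hp)

lemma PathLE.card_le (h : PathLE S T) (hS : S ⊆ Finset.Icc 1 n) (hT : T ⊆ Finset.Icc 1 n) :
    #S ≤ #T := by
  simpa only [height_of_le hS le_rfl, height_of_le hT le_rfl] using h n

lemma height_sdiff_add (hS : S ⊆ Finset.Icc 1 n) (p : ℕ) :
    height (Finset.Icc 1 n \ S) p + height S p = height (Finset.Icc 1 n) p := by
  have : {x ∈ Finset.Icc 1 n \ S | x ≤ p} = {x ∈ Finset.Icc 1 n | x ≤ p} \ {x ∈ S | x ≤ p} := by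
    ext x
    simp only [Finset.mem_filter, Finset.mem_sdiff]
    tauto
  rw [height, height, height, this]
  exact Finset.card_sdiff_add_card_eq_card (Finset.filter_subset_filter _ hS)

lemma pathLE_sdiff_iff (hS : S ⊆ Finset.Icc 1 n) (hT : T ⊆ Finset.Icc 1 n) :
    PathLE (Finset.Icc 1 n \ T) (Finset.Icc 1 n \ S) ↔ PathLE S T := by
  refine forall_congr' fun p => ?_
  have := height_sdiff_add hS p
  have := height_sdiff_add hT p
  omega

lemma height_filter_pred_lt {c : ℕ → ℕ} (hc₀ : c 0 = 0) (hmono : ∀ p, c p ≤ c (p + 1))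
    (hstep : ∀ p, c (p + 1) ≤ c p + 1) :
    ∀ p ≤ n, height ((Finset.Icc 1 n).filter fun k => c (k - 1) < c k) p = c p := by
  intro p
  induction p with
  | zero =>
    intro _
    rw [hc₀]
    exact height_zero (Finset.filter_subset _ _)
  | succ p ih =>
    intro hp
    rw [height_succ, ih (by omega)]
    simp only [Finset.mem_filter, Finset.mem_Icc, Nat.add_sub_cancel]
    have := hmono p
    have := hstep p
    split_ifs <;> omega

end Bounded

/-- The height function of the lowest lattice path that stays weakly above `U` and takes a north
step at every element of `X`. -/
def greedyHeight (U X : Finset ℕ) : ℕ → ℕ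
  | 0 => height U 0
  | p + 1 => max (height U (p + 1)) (greedyHeight U X p + if p + 1 ∈ X then 1 else 0)

section Greedy

variable {U X : Finset ℕ}

lemma greedyHeight_mono (p : ℕ) : greedyHeight U X p ≤ greedyHeight U X (p + 1) :=
  (Nat.le_add_right _ _).trans (le_max_right _ _)

lemma height_le_greedyHeight : ∀ p, height U p ≤ greedyHeight U X p
  | 0 => le_rfl
  | _ + 1 => le_max_left _ _

lemma greedyHeight_succ_le (p : ℕ) : greedyHeight U X (p + 1) ≤ greedyHeight U X p + 1 := by
  have h₁ := height_succ U p
  have h₂ := height_le_greedyHeight (U := U) (X := X) p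
  simp only [greedyHeight]
  split_ifs at h₁ ⊢ <;> omega

lemma greedyHeight_succ_of_mem {p : ℕ} (hp : p + 1 ∈ X) :
    greedyHeight U X (p + 1) = greedyHeight U X p + 1 :=
  le_antisymm (greedyHeight_succ_le p) (by simp only [greedyHeight, if_pos hp, le_max_right])

/-- The greedy path last touched `U` at some step `q ≤ p`, and followed `X` since then. -/
lemma exists_greedyHeight_eq (p : ℕ) :
    ∃ q ≤ p, greedyHeight U X p + height X q = height U q + height X p := by
  induction p with
  | zero => exact ⟨0, le_rfl, rfl⟩
  | succ p ih =>
    obtain ⟨q, hqp, hq⟩ := ih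
    have := height_succ X p
    rcases le_total (greedyHeight U X p + if p + 1 ∈ X then 1 else 0) (height U (p + 1)) with h | h
    · exact ⟨p + 1, le_rfl, by simp only [greedyHeight, max_eq_left h]⟩
    · exact ⟨q, by omega, by simp only [greedyHeight, max_eq_right h]; omega⟩

theorem exists_superset_pathLE {L : Finset ℕ} {n : ℕ} (hU : U ⊆ Finset.Icc 1 n)
    (hX : X ⊆ Finset.Icc 1 n)
    (hHall : ∀ q p, q ≤ p → height U q + height X p ≤ height L p + height X q) :
    ∃ T, X ⊆ T ∧ T ⊆ Finset.Icc 1 n ∧ PathLE U T ∧ PathLE T L := by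
  set T := (Finset.Icc 1 n).filter fun k => greedyHeight U X (k - 1) < greedyHeight U X k
  have hT : T ⊆ Finset.Icc 1 n := Finset.filter_subset _ _
  have hTc : ∀ p ≤ n, height T p = greedyHeight U X p :=
    height_filter_pred_lt (c := greedyHeight U X) (height_zero hU) greedyHeight_mono
      greedyHeight_succ_le
  have hcL : ∀ p, greedyHeight U X p ≤ height L p := fun p => by
    obtain ⟨q, hqp, hq⟩ := exists_greedyHeight_eq (U := U) (X := X) p
    have := hHall q p hqp
    omega
  have hTU : ∀ p, height T p = greedyHeight U X (min p n) := fun p => by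
    rcases le_total p n with h | h
    · rw [min_eq_left h, hTc p h]
    · rw [min_eq_right h, ← hTc n le_rfl, height_of_le hT h, height_of_le hT le_rfl]
  refine ⟨T, fun x hx => ?_, hT, fun p => ?_, fun p => ?_⟩
  · obtain ⟨hx1, -⟩ := Finset.mem_Icc.1 (hX hx)
    obtain ⟨k, rfl⟩ : ∃ k, x = k + 1 := ⟨x - 1, by omega⟩
    refine Finset.mem_filter.2 ⟨hX hx, ?_⟩
    rw [Nat.add_sub_cancel, greedyHeight_succ_of_mem hx]
    omega
  · rw [hTU]
    rcases le_total p n with h | h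
    · rw [min_eq_left h]
      exact height_le_greedyHeight p
    · rw [min_eq_right h, height_of_le hU h, ← height_of_le hU le_rfl]
      exact height_le_greedyHeight n
  · rw [hTU]
    exact (hcL _).trans (height_mono L (min_le_left p n))

end Greedy

/-! ### Interval presentations -/

section Intervals

variable {r : ℕ} {l u : Fin r → ℕ}

lemma image_subset_Icc {f : Fin r → ℕ} {n : ℕ} (hf : ∀ i, 1 ≤ f i ∧ f i ≤ n) :
    Finset.univ.image f ⊆ Finset.Icc 1 n := fun x hx => by
  obtain ⟨i, -, rfl⟩ := Finset.mem_image.1 hx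
  exact Finset.mem_Icc.2 (hf i)

lemma pathLE_image (hl : StrictMono l) (hu : StrictMono u) (hlu : ∀ i, l i ≤ u i) :
    PathLE (Finset.univ.image u) (Finset.univ.image l) := by
  intro p
  by_contra! h
  have hr : height (Finset.univ.image u) p ≤ r :=
    (height_le_card _ p).trans (Finset.card_image_le.trans_eq (Finset.card_fin r))
  have hi := (lt_height_image_iff hu ⟨_, h.trans_le hr⟩ p).1 h
  exact (lt_height_image_iff hl ⟨_, h.trans_le hr⟩ p).2 ((hlu _).trans hi) |>.false

lemma IsPartialTransversal.height_add_le (hl : StrictMono l) (hu : StrictMono u)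
    (hlu : ∀ i, l i ≤ u i) {X : Finset ℕ}
    (hX : IsPartialTransversal (fun i => Icc (l i) (u i)) ↑X) {q p : ℕ} (hqp : q ≤ p) :
    height (Finset.univ.image u) q + height X p ≤
      height (Finset.univ.image l) p + height X q := by
  set hU := height (Finset.univ.image u) q
  set hL := height (Finset.univ.image l) p
  have hwindow := hX.card_le (S := {x ∈ X | q < x ∧ x ≤ p})
    (fun x hx => (Finset.mem_filter.1 hx).1) (fun i => hU ≤ i ∧ (i : ℕ) < hL) fun x hx i hxi => by
      obtain ⟨-, hqx, hxp⟩ := Finset.mem_filter.1 hx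
      refine ⟨not_lt.1 fun hiq => ?_, (lt_height_image_iff hl i p).2 (hxi.1.trans hxp)⟩
      have := (lt_height_image_iff hu i q).1 hiq
      exact absurd hxi.2 (by omega)
  have hIco : #(Finset.univ.filter fun i : Fin r => hU ≤ i ∧ (i : ℕ) < hL) ≤ hL - hU := by
    rw [← Nat.card_Ico]
    refine Finset.card_le_card_of_injOn (fun i => (i : ℕ)) (fun i hi => ?_) Fin.val_injective.injOn
    simpa using (Finset.mem_filter.1 hi).2
  have hUL := (pathLE_image hl hu hlu q).trans (height_mono _ hqp)
  have := height_add_card_filter X hqp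
  omega

/-- The `k`-th element of a path between `U` and `L` lies in the `k`-th interval. -/
lemma isPartialTransversal_of_pathLE (hl : StrictMono l) (hu : StrictMono u) {T : Finset ℕ}
    (hUT : PathLE (Finset.univ.image u) T) (hTL : PathLE T (Finset.univ.image l)) :
    IsPartialTransversal (fun i => Icc (l i) (u i)) ↑T := by
  have hr : ∀ t ∈ T, height T t - 1 < r := fun t ht => by
    have := (hTL t).trans ((height_le_card _ t).trans
      (Finset.card_image_le.trans_eq (Finset.card_fin r)))
    have := one_le_height ht
    omega
  refine ⟨fun t => ⟨height T t - 1, hr t t.2⟩, fun s t hst => ?_, fun t => ⟨?_, ?_⟩⟩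
  · have hst : height T s = height T t := by
      have := one_le_height s.2
      have := one_le_height t.2
      simp only [Fin.mk.injEq] at hst
      omega
    rcases lt_trichotomy (s : ℕ) t with h | h | h
    · exact absurd hst (height_lt_height t.2 h).ne
    · exact Subtype.ext h
    · exact absurd hst (height_lt_height s.2 h).ne'
  · refine (lt_height_image_iff hl _ t).1 (lt_of_lt_of_le ?_ (hTL t))
    have := one_le_height t.2
    simp only
    omega
  · by_contra! hut
    have hlt := (lt_height_image_iff hu ⟨_, hr t t.2⟩ (t - 1)).2 (by omega)
    have hsucc := height_succ T (t - 1)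
    rw [Nat.sub_add_cancel (by omega), if_pos (Finset.mem_coe.1 t.2)] at hsucc
    have := hUT (t - 1)
    simp only at hlt
    omega

theorem isPartialTransversal_iff_exists_pathLE (hl : StrictMono l) (hu : StrictMono u)
    (hlu : ∀ i, l i ≤ u i) {n : ℕ} (hU : Finset.univ.image u ⊆ Finset.Icc 1 n) {X : Finset ℕ}
    (hX : X ⊆ Finset.Icc 1 n) :
    IsPartialTransversal (fun i => Icc (l i) (u i)) ↑X ↔
      ∃ T, X ⊆ T ∧ T ⊆ Finset.Icc 1 n ∧ PathLE (Finset.univ.image u) T ∧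
        PathLE T (Finset.univ.image l) := by
  refine ⟨fun h => exists_superset_pathLE hU hX fun q p hqp => h.height_add_le hl hu hlu hqp, ?_⟩
  rintro ⟨T, hXT, -, hUT, hTL⟩
  exact (isPartialTransversal_of_pathLE hl hu hUT hTL).mono (Finset.coe_subset.2 hXT)

end Intervals

/-! ### Bases of lattice path matroids -/

lemma exists_finset_image_eq {β : Type*} {g : β → α} {s : Finset β} {I : Set α}
    (h : I ⊆ g '' ↑s) : ∃ X ⊆ s, I = g '' ↑X := by
  classical
  refine ⟨s.filter (g · ∈ I), Finset.filter_subset _ _, Set.Subset.antisymm (fun x hx => ?_) ?_⟩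
  · obtain ⟨y, hy, rfl⟩ := h hx
    exact ⟨y, Finset.mem_filter.2 ⟨hy, hx⟩, rfl⟩
  · rintro _ ⟨y, hy, rfl⟩
    exact (Finset.mem_filter.1 hy).2

/-- Via the labelling `g` of its ground set by `{1, …, n}`, the bases of `M` are the lattice
paths lying between the lower path `U` and the upper path `L`. -/
structure HasBoundingPaths (M : Matroid α) (n : ℕ) (g : ℕ → α) (L U : Finset ℕ) : Prop where
  injOn : InjOn g (Icc 1 n)
  image_eq : g '' Icc 1 n = M.E
  upper_subset : L ⊆ Finset.Icc 1 n
  lower_subset : U ⊆ Finset.Icc 1 n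
  card_eq : #L = #U
  isBase_iff : ∀ B, M.IsBase B ↔ ∃ T ⊆ Finset.Icc 1 n, PathLE U T ∧ PathLE T L ∧ B = g '' ↑T

section Bridge

variable {M : Matroid α} {n r : ℕ} {g : ℕ → α} {l u : Fin r → ℕ}

lemma subset_ground_and_isPartialTransversal_iff (hg : InjOn g (Icc 1 n))
    (hgE : g '' Icc 1 n = M.E) (hl : StrictMono l) (hu : StrictMono u) (hlu : ∀ i, l i ≤ u i)
    (hl₁ : ∀ i, 1 ≤ l i) (hun : ∀ i, u i ≤ n) (I : Set α) :
    (I ⊆ M.E ∧ IsPartialTransversal (fun i => g '' Icc (l i) (u i)) I) ↔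
      ∃ T ⊆ Finset.Icc 1 n, PathLE (Finset.univ.image u) T ∧ PathLE T (Finset.univ.image l) ∧
        I ⊆ g '' ↑T := by
  have hU := image_subset_Icc fun i => ⟨(hl₁ i).trans (hlu i), hun i⟩
  have hN : ∀ i, Icc (l i) (u i) ⊆ Icc 1 n := fun i => Icc_subset_Icc (hl₁ i) (hun i)
  have hgE' : g '' ↑(Finset.Icc 1 n) = M.E := by rwa [Finset.coe_Icc]
  constructor
  · rintro ⟨hIE, hI⟩
    obtain ⟨X, hX, rfl⟩ := exists_finset_image_eq (hgE'.symm ▸ hIE)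
    rw [isPartialTransversal_image_iff hg (coe_subset_Icc hX) hN,
      isPartialTransversal_iff_exists_pathLE hl hu hlu hU hX] at hI
    obtain ⟨T, hXT, hT, hUT, hTL⟩ := hI
    exact ⟨T, hT, hUT, hTL, image_mono (Finset.coe_subset.2 hXT)⟩
  · rintro ⟨T, hT, hUT, hTL, hIT⟩
    obtain ⟨X, hXT, rfl⟩ := exists_finset_image_eq hIT
    have hX := hXT.trans hT
    refine ⟨hgE' ▸ image_mono (Finset.coe_subset.2 hX), ?_⟩
    rw [isPartialTransversal_image_iff hg (coe_subset_Icc hX) hN,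
      isPartialTransversal_iff_exists_pathLE hl hu hlu hU hX]
    exact ⟨T, hXT, hT, hUT, hTL⟩

theorem exists_hasBoundingPaths (hM : LatticePath M) : ∃ n g L U, HasBoundingPaths M n g L U := by
  obtain ⟨r, m, g, l, u, hg, hgE, hl, hu, hb, -, hind⟩ := hM
  have hL := image_subset_Icc fun i => ⟨(hb i).1, (hb i).2.1.trans (hb i).2.2⟩
  have hU := image_subset_Icc fun i => ⟨(hb i).1.trans (hb i).2.1, (hb i).2.2⟩
  have hcardL : #(Finset.univ.image l) = r := by
    rw [Finset.card_image_of_injective _ hl.injective, Finset.card_fin]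
  have hcardU : #(Finset.univ.image u) = r := by
    rw [Finset.card_image_of_injective _ hu.injective, Finset.card_fin]
  refine ⟨m + r, g, _, _, ⟨hg, hgE, hL, hU, hcardL.trans hcardU.symm,
    Matroid.isBase_iff_of_indep_iff (𝔅 := {B | ∃ T ⊆ Finset.Icc 1 (m + r),
      PathLE (Finset.univ.image u) T ∧ PathLE T (Finset.univ.image l) ∧ B = g '' ↑T}) ?_
      fun I => ?_⟩⟩
  · rintro _ ⟨T, hT, hUT, -, rfl⟩ _ ⟨T', hT', -, hTL', rfl⟩ hne hTT'
    rw [hg.image_subset_image_iff (coe_subset_Icc hT) (coe_subset_Icc hT'),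
      Finset.coe_subset] at hTT'
    have hcard : #T' ≤ #T := by
      have := hTL'.card_le hT' hL
      have := hUT.card_le hU hT
      omega
    exact hne (by rw [Finset.eq_of_subset_of_card_le hTT' hcard])
  · refine (hind I).trans ((subset_ground_and_isPartialTransversal_iff hg hgE hl hu
      (fun i => (hb i).2.1) (fun i => (hb i).1) (fun i => (hb i).2.2) I).trans ?_)
    constructor
    · rintro ⟨T, hT, hUT, hTL, hIT⟩
      exact ⟨_, ⟨T, hT, hUT, hTL, rfl⟩, hIT⟩
    · rintro ⟨_, ⟨T, hT, hUT, hTL, rfl⟩, hIT⟩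
      exact ⟨T, hT, hUT, hTL, hIT⟩

namespace HasBoundingPaths

variable {L U : Finset ℕ}

lemma pathLE (h : HasBoundingPaths M n g L U) : PathLE U L := by
  obtain ⟨B, hB⟩ := M.exists_isBase
  obtain ⟨T, -, hUT, hTL, -⟩ := (h.isBase_iff B).1 hB
  exact hUT.trans hTL

theorem latticePath (h : HasBoundingPaths M n g L U) : LatticePath M := by
  set r := #L
  set l := L.orderEmbOfFin rfl
  set u := U.orderEmbOfFin h.card_eq.symm
  obtain ⟨m, rfl⟩ : ∃ m, n = m + r := ⟨n - r, by
    have := Finset.card_le_card h.upper_subset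
    rw [Nat.card_Icc] at this
    omega⟩
  have hlu : ∀ i, l i ≤ u i := fun i => (lt_height_iff_orderEmbOfFin_le _ i _).1
    (((lt_height_iff_orderEmbOfFin_le _ i _).2 le_rfl).trans_le (h.pathLE _))
  have hl₁ : ∀ i, 1 ≤ l i := fun i =>
    (Finset.mem_Icc.1 (h.upper_subset (Finset.orderEmbOfFin_mem _ _ i))).1
  have hun : ∀ i, u i ≤ m + r := fun i =>
    (Finset.mem_Icc.1 (h.lower_subset (Finset.orderEmbOfFin_mem _ _ i))).2
  refine ⟨r, m, g, l, u, h.injOn, h.image_eq, l.strictMono, u.strictMono,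
    fun i => ⟨hl₁ i, hlu i, hun i⟩,
    fun i => h.image_eq ▸ image_mono (Icc_subset_Icc (hl₁ i) (hun i)), fun I => ?_⟩
  change M.Indep I ↔ I ⊆ M.E ∧ IsPartialTransversal (fun i => g '' Icc (l i) (u i)) I
  rw [subset_ground_and_isPartialTransversal_iff h.injOn h.image_eq l.strictMono u.strictMono
    hlu hl₁ hun, L.image_orderEmbOfFin_univ, U.image_orderEmbOfFin_univ]
  constructor
  · intro hI
    obtain ⟨B, hB, hIB⟩ := hI.exists_isBase_superset
    obtain ⟨T, hT, hUT, hTL, rfl⟩ := (h.isBase_iff B).1 hB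
    exact ⟨T, hT, hUT, hTL, hIB⟩
  · rintro ⟨T, hT, hUT, hTL, hIT⟩
    exact ((h.isBase_iff _).2 ⟨T, hT, hUT, hTL, rfl⟩).indep.subset hIT

end HasBoundingPaths

end Bridge

/-! ### Duality -/

namespace HasBoundingPaths

variable {M : Matroid α} {n : ℕ} {g : ℕ → α} {L U : Finset ℕ}

lemma image_sdiff (h : HasBoundingPaths M n g L U) {S : Finset ℕ} (hS : S ⊆ Finset.Icc 1 n) :
    g '' ↑(Finset.Icc 1 n \ S) = M.E \ g '' ↑S := by
  rw [Finset.coe_sdiff, Finset.coe_Icc, h.injOn.image_sdiff_subset (coe_subset_Icc hS),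
    h.image_eq]

lemma dual (h : HasBoundingPaths M n g L U) :
    HasBoundingPaths M✶ n g (Finset.Icc 1 n \ U) (Finset.Icc 1 n \ L) where
  injOn := h.injOn
  image_eq := h.image_eq
  upper_subset := Finset.sdiff_subset
  lower_subset := Finset.sdiff_subset
  card_eq := by
    rw [Finset.card_sdiff_of_subset h.lower_subset, Finset.card_sdiff_of_subset h.upper_subset,
      h.card_eq]
  isBase_iff B := by
    rw [dual_isBase_iff', h.isBase_iff]
    constructor
    · rintro ⟨⟨T, hT, hUT, hTL, hBT⟩, hBE⟩
      refine ⟨Finset.Icc 1 n \ T, Finset.sdiff_subset,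
        (pathLE_sdiff_iff hT h.upper_subset).2 hTL, (pathLE_sdiff_iff h.lower_subset hT).2 hUT, ?_⟩
      rw [h.image_sdiff hT, ← hBT, sdiff_sdiff_cancel_left hBE]
    · rintro ⟨T, hT, hUT, hTL, rfl⟩
      have hT' : Finset.Icc 1 n \ T ⊆ Finset.Icc 1 n := Finset.sdiff_subset
      rw [← Finset.sdiff_sdiff_eq_self hT, pathLE_sdiff_iff hT' h.upper_subset] at hUT
      rw [← Finset.sdiff_sdiff_eq_self hT, pathLE_sdiff_iff h.lower_subset hT'] at hTL
      refine ⟨⟨_, hT', hTL, hUT, (h.image_sdiff hT).symm⟩, ?_⟩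
      rw [← h.image_eq]
      exact image_mono (coe_subset_Icc hT)

end HasBoundingPaths

/-! ### Deletion -/

lemma height_swap_add {S : Finset ℕ} {a b : ℕ} (ha : a ∈ S) (hb : b ∉ S) (p : ℕ) :
    height (insert b (S.erase a)) p + (if a ≤ p then 1 else 0) =
      height S p + if b ≤ p then 1 else 0 := by
  rw [height_insert (fun h => hb (Finset.mem_of_mem_erase h)), ← height_erase_add ha p]
  omega

lemma PathLE.height_lt_of_run_from {T L : Finset ℕ} (h : PathLE T L) {a b : ℕ} (ha₁ : 1 ≤ a)
    (ha : a ∈ L) (hrun : ∀ x, a < x → x < b → x ∈ L) (haT : a ∉ T) {p : ℕ} (hap : a ≤ p)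
    (hpb : p < b) : height T p < height L p := by
  induction p, hap using Nat.le_induction with
  | base =>
    obtain ⟨k, rfl⟩ : ∃ k, a = k + 1 := ⟨a - 1, by omega⟩
    rw [height_succ, height_succ, if_neg haT, if_pos ha]
    exact Nat.lt_succ_of_le (h k)
  | succ p hap ih =>
    rw [height_succ, height_succ, if_pos (hrun _ (by omega) hpb)]
    have := ih (by omega)
    split_ifs <;> omega

lemma PathLE.height_lt_of_run_to {U T : Finset ℕ} (h : PathLE U T) {a c : ℕ} (ha : a ∈ U)
    (hrun : ∀ x, c < x → x < a → x ∈ U) (haT : a ∉ T) {p : ℕ} (hcp : c ≤ p) (hpa : p < a) :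
    height U p < height T p := by
  have ha₁ : 1 ≤ a := by omega
  have hp : p ≤ a - 1 := by omega
  induction hp using Nat.decreasingInduction with
  | self =>
    obtain ⟨j, rfl⟩ : ∃ j, a = j + 1 := ⟨a - 1, by omega⟩
    have := h (j + 1)
    rw [height_succ, height_succ, if_neg haT, if_pos ha] at this
    simpa using this
  | of_succ p hp ih =>
    have := ih (by omega)
    rw [height_succ, height_succ, if_pos (hrun _ (by omega) (by omega))] at this
    split_ifs at this <;> omega

lemma pathLE_swap_iff {T L : Finset ℕ} {a b : ℕ} (ha₁ : 1 ≤ a) (ha : a ∈ L) (hbL : b ∉ L)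
    (hab : a < b) (hrun : ∀ x, a < x → x < b → x ∈ L) (haT : a ∉ T) :
    PathLE T (insert b (L.erase a)) ↔ PathLE T L := by
  refine ⟨fun h p => ?_, fun h p => ?_⟩ <;> have := height_swap_add ha hbL p <;> have := h p
  · split_ifs at * <;> omega
  by_cases hap : a ≤ p
  · by_cases hbp : b ≤ p
    · simp only [if_pos hap, if_pos hbp] at *
      omega
    · have := h.height_lt_of_run_from ha₁ ha hrun haT hap (not_le.1 hbp)
      simp only [if_pos hap, if_neg hbp] at *
      omega
  · simp only [if_neg hap, if_neg (show ¬ b ≤ p by omega)] at *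
    omega

lemma swap_pathLE_iff {U T : Finset ℕ} {a c : ℕ} (ha : a ∈ U) (hcU : c ∉ U) (hca : c < a)
    (hrun : ∀ x, c < x → x < a → x ∈ U) (haT : a ∉ T) :
    PathLE (insert c (U.erase a)) T ↔ PathLE U T := by
  refine ⟨fun h p => ?_, fun h p => ?_⟩ <;> have := height_swap_add ha hcU p <;> have := h p
  · split_ifs at * <;> omega
  by_cases hcp : c ≤ p
  · by_cases hap : a ≤ p
    · simp only [if_pos hap, if_pos hcp] at *
      omega
    · have := h.height_lt_of_run_to ha hrun haT hcp (not_le.1 hap)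
      simp only [if_neg hap, if_pos hcp] at *
      omega
  · simp only [if_neg hcp, if_neg (show ¬ a ≤ p by omega)] at *
    omega

section Swap

variable {n a : ℕ}

lemma exists_upper_notMem {L T₀ : Finset ℕ} (hL : L ⊆ Finset.Icc 1 n) (ha₁ : 1 ≤ a)
    (hT₀ : T₀ ⊆ Finset.Icc 1 n) (haT₀ : a ∉ T₀) (hT₀L : PathLE T₀ L) (hcard : #L ≤ #T₀) :
    ∃ L' ⊆ Finset.Icc 1 n, a ∉ L' ∧ #L' = #L ∧ ∀ T, a ∉ T → (PathLE T L' ↔ PathLE T L) := by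
  by_cases ha : a ∉ L
  · exact ⟨L, hL, ha, rfl, fun _ _ => Iff.rfl⟩
  rw [not_not] at ha
  have hex : ∃ x, a < x ∧ x ∉ L := by
    obtain ⟨x, hx⟩ := Infinite.exists_notMem_finset (L ∪ Finset.range (a + 1))
    simp only [Finset.mem_union, Finset.mem_range, not_or, not_lt] at hx
    exact ⟨x, by omega, hx.1⟩
  obtain ⟨hab, hbL⟩ := Nat.find_spec hex
  have hrun : ∀ x, a < x → x < Nat.find hex → x ∈ L := fun x hax hxb =>
    not_not.1 fun hxL => Nat.find_min hex hxb ⟨hax, hxL⟩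
  have hswap := fun T (haT : a ∉ T) => pathLE_swap_iff ha₁ ha hbL hab hrun haT
  have hcard' : #(insert (Nat.find hex) (L.erase a)) = #L := by
    rw [Finset.card_insert_of_notMem (fun h => hbL (Finset.mem_of_mem_erase h)),
      Finset.card_erase_add_one ha]
  have hbn : Nat.find hex ≤ n := by
    by_contra! hbn
    have h₁ := (hswap T₀ haT₀).2 hT₀L n
    have h₂ : height (insert (Nat.find hex) (L.erase a)) n <
        #(insert (Nat.find hex) (L.erase a)) :=
      Finset.card_lt_card (Finset.filter_ssubset.2 ⟨_, Finset.mem_insert_self _ _, by omega⟩)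
    rw [height_of_le hT₀ le_rfl] at h₁
    omega
  refine ⟨_, fun x hx => ?_, fun h => ?_, hcard', hswap⟩
  · rcases Finset.mem_insert.1 hx with rfl | hx
    · exact Finset.mem_Icc.2 ⟨by omega, hbn⟩
    · exact hL (Finset.mem_of_mem_erase hx)
  · rcases Finset.mem_insert.1 h with h | h
    · omega
    · exact Finset.notMem_erase a L h

lemma exists_lower_notMem {U T₀ : Finset ℕ} (hU : U ⊆ Finset.Icc 1 n)
    (hT₀ : T₀ ⊆ Finset.Icc 1 n) (haT₀ : a ∉ T₀) (hUT₀ : PathLE U T₀) :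
    ∃ U' ⊆ Finset.Icc 1 n, a ∉ U' ∧ #U' = #U ∧ ∀ T, a ∉ T → (PathLE U' T ↔ PathLE U T) := by
  by_cases ha : a ∉ U
  · exact ⟨U, hU, ha, rfl, fun _ _ => Iff.rfl⟩
  rw [not_not] at ha
  have h0U : 0 ∉ U := fun h => by simpa using hU h
  have hcU : Nat.findGreatest (· ∉ U) a ∉ U :=
    Nat.findGreatest_spec (P := (· ∉ U)) (Nat.zero_le a) h0U
  have hca : Nat.findGreatest (· ∉ U) a < a :=
    (Nat.findGreatest_le a).lt_of_ne fun h => hcU (by rwa [h])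
  have hrun : ∀ x, Nat.findGreatest (· ∉ U) a < x → x < a → x ∈ U := fun x hcx hxa =>
    not_not.1 (Nat.findGreatest_is_greatest hcx hxa.le)
  generalize Nat.findGreatest (· ∉ U) a = c at hcU hca hrun
  have hswap := fun T (haT : a ∉ T) => swap_pathLE_iff ha hcU hca hrun haT
  have hc₁ : 1 ≤ c := by
    by_contra! hc
    obtain rfl : c = 0 := by omega
    have h₁ := (hswap T₀ haT₀).2 hUT₀ 0
    have h₂ := one_le_height (Finset.mem_insert_self 0 (U.erase a))
    rw [height_zero hT₀] at h₁
    omega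
  have han := (Finset.mem_Icc.1 (hU ha)).2
  refine ⟨_, fun x hx => ?_, fun h => ?_, ?_, hswap⟩
  · rcases Finset.mem_insert.1 hx with rfl | hx
    · exact Finset.mem_Icc.2 ⟨hc₁, by omega⟩
    · exact hU (Finset.mem_of_mem_erase hx)
  · rcases Finset.mem_insert.1 h with h | h
    · omega
    · exact Finset.notMem_erase a U h
  · rw [Finset.card_insert_of_notMem (fun h => hcU (Finset.mem_of_mem_erase h)),
      Finset.card_erase_add_one ha]

end Swap

def succAbove (a x : ℕ) : ℕ := if x < a then x else x + 1

def predAbove (a y : ℕ) : ℕ := if y < a then y else y - 1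

section Relabel

variable {a n : ℕ}

lemma succAbove_strictMono (a : ℕ) : StrictMono (succAbove a) := fun x y h => by
  simp only [succAbove]; split_ifs <;> omega

lemma succAbove_ne (a x : ℕ) : succAbove a x ≠ a := by
  simp only [succAbove]; split_ifs <;> omega

lemma predAbove_succAbove (a x : ℕ) : predAbove a (succAbove a x) = x := by
  simp only [succAbove, predAbove]; split_ifs <;> omega

lemma succAbove_predAbove {y : ℕ} (h : y ≠ a) : succAbove a (predAbove a y) = y := by
  simp only [succAbove, predAbove]; split_ifs <;> omega

lemma succAbove_le_iff (ha : 1 ≤ a) {x q : ℕ} : succAbove a x ≤ q ↔ x ≤ predAbove a q := by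
  simp only [succAbove, predAbove]; split_ifs <;> omega

lemma succAbove_mem_Icc (ha : a ∈ Icc 1 n) {x : ℕ} (hx : x ∈ Icc 1 (n - 1)) :
    succAbove a x ∈ Icc 1 n := by
  simp only [succAbove, mem_Icc] at *; split_ifs <;> omega

lemma predAbove_mem_Icc (ha : a ∈ Icc 1 n) {y : ℕ} (hy : y ∈ Icc 1 n) (hya : y ≠ a) :
    predAbove a y ∈ Icc 1 (n - 1) := by
  simp only [predAbove, mem_Icc] at *; split_ifs <;> omega

lemma image_succAbove_Icc (ha : a ∈ Icc 1 n) : succAbove a '' Icc 1 (n - 1) = Icc 1 n \ {a} := by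
  refine Subset.antisymm ?_ fun y ⟨hy, hya⟩ => ⟨_, predAbove_mem_Icc ha hy hya,
    succAbove_predAbove hya⟩
  rintro _ ⟨x, hx, rfl⟩
  exact ⟨succAbove_mem_Icc ha hx, succAbove_ne a x⟩

lemma height_image_succAbove (ha : 1 ≤ a) (S : Finset ℕ) (q : ℕ) :
    height (S.image (succAbove a)) q = height S (predAbove a q) := by
  rw [height, height, Finset.filter_image,
    Finset.card_image_of_injective _ (succAbove_strictMono a).injective]
  simp only [succAbove_le_iff ha]

lemma pathLE_image_succAbove_iff (ha : 1 ≤ a) {S T : Finset ℕ} :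
    PathLE (S.image (succAbove a)) (T.image (succAbove a)) ↔ PathLE S T := by
  simp only [PathLE, height_image_succAbove ha]
  exact ⟨fun h p => predAbove_succAbove a p ▸ h (succAbove a p), fun h q => h _⟩

lemma exists_image_succAbove_eq (ha : a ∈ Icc 1 n) {S : Finset ℕ} (hS : S ⊆ Finset.Icc 1 n)
    (haS : a ∉ S) : ∃ S' ⊆ Finset.Icc 1 (n - 1), S'.image (succAbove a) = S := by
  refine ⟨S.image (predAbove a), fun y hy => ?_, ?_⟩
  · obtain ⟨x, hx, rfl⟩ := Finset.mem_image.1 hy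
    simpa using predAbove_mem_Icc ha (coe_subset_Icc hS hx) (ne_of_mem_of_not_mem hx haS)
  · rw [Finset.image_image]
    exact (Finset.image_congr fun x hx => succAbove_predAbove
      (ne_of_mem_of_not_mem (Finset.mem_coe.1 hx) haS)).trans S.image_id

lemma image_succAbove_subset (ha : a ∈ Icc 1 n) {S : Finset ℕ} (hS : S ⊆ Finset.Icc 1 (n - 1)) :
    S.image (succAbove a) ⊆ Finset.Icc 1 n := fun y hy => by
  obtain ⟨x, hx, rfl⟩ := Finset.mem_image.1 hy
  simpa using succAbove_mem_Icc ha (coe_subset_Icc hS hx)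

lemma notMem_image_succAbove (S : Finset ℕ) : a ∉ S.image (succAbove a) := fun h => by
  obtain ⟨x, -, hx⟩ := Finset.mem_image.1 h
  exact succAbove_ne a x hx

end Relabel

namespace HasBoundingPaths

variable {M : Matroid α} {n : ℕ} {g : ℕ → α} {L U : Finset ℕ}

lemma isBase_delete_iff (h : HasBoundingPaths M n g L U) {a : ℕ} (ha : a ∈ Icc 1 n)
    (hcoind : M.Coindep {g a}) (B : Set α) :
    (M ＼ {g a}).IsBase B ↔
      ∃ T ⊆ Finset.Icc 1 n, a ∉ T ∧ PathLE U T ∧ PathLE T L ∧ B = g '' ↑T := by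
  rw [hcoind.delete_isBase_iff, h.isBase_iff]
  constructor
  · rintro ⟨⟨T, hT, hUT, hTL, rfl⟩, hdisj⟩
    exact ⟨T, hT, fun haT => disjoint_singleton_right.1 hdisj (mem_image_of_mem g haT),
      hUT, hTL, rfl⟩
  · rintro ⟨T, hT, haT, hUT, hTL, rfl⟩
    refine ⟨⟨T, hT, hUT, hTL, rfl⟩, disjoint_singleton_right.2 ?_⟩
    rintro ⟨x, hx, hxa⟩
    exact haT (h.injOn (coe_subset_Icc hT hx) ha hxa ▸ hx)

lemma delete (h : HasBoundingPaths M n g L U) {a : ℕ} (ha : a ∈ Icc 1 n)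
    (hcoind : M.Coindep {g a}) :
    ∃ L' U', HasBoundingPaths (M ＼ {g a}) (n - 1) (g ∘ succAbove a) L' U' := by
  have hbase := h.isBase_delete_iff ha hcoind
  obtain ⟨B₀, hB₀⟩ := (M ＼ {g a}).exists_isBase
  obtain ⟨T₀, hT₀, haT₀, hUT₀, hT₀L, -⟩ := (hbase B₀).1 hB₀
  obtain ⟨L'', hL'', haL'', hcardL, hL⟩ := exists_upper_notMem h.upper_subset ha.1 hT₀ haT₀ hT₀L
    (h.card_eq ▸ hUT₀.card_le h.lower_subset hT₀)
  obtain ⟨U'', hU'', haU'', hcardU, hU⟩ := exists_lower_notMem h.lower_subset hT₀ haT₀ hUT₀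
  obtain ⟨L', hL', rfl⟩ := exists_image_succAbove_eq ha hL'' haL''
  obtain ⟨U', hU', rfl⟩ := exists_image_succAbove_eq ha hU'' haU''
  have hinj := (succAbove_strictMono a).injective
  refine ⟨L', U', ⟨h.injOn.comp hinj.injOn fun x hx => succAbove_mem_Icc ha hx, ?_, hL', hU', ?_,
    fun B => ?_⟩⟩
  · rw [image_comp, image_succAbove_Icc ha, h.injOn.image_sdiff_subset (singleton_subset_iff.2 ha),
      image_singleton, h.image_eq, delete_ground]
  · rw [Finset.card_image_of_injective _ hinj] at hcardL hcardU
    rw [hcardL, hcardU, h.card_eq]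
  rw [hbase]
  constructor
  · rintro ⟨T, hT, haT, hUT, hTL, rfl⟩
    obtain ⟨T', hT', rfl⟩ := exists_image_succAbove_eq ha hT haT
    rw [← hU _ haT, pathLE_image_succAbove_iff ha.1] at hUT
    rw [← hL _ haT, pathLE_image_succAbove_iff ha.1] at hTL
    exact ⟨T', hT', hUT, hTL, by rw [Finset.coe_image, image_comp]⟩
  · rintro ⟨T', hT', hUT', hTL', rfl⟩
    have haT := notMem_image_succAbove (a := a) T'
    exact ⟨_, image_succAbove_subset ha hT', haT,
      (hU _ haT).1 ((pathLE_image_succAbove_iff ha.1).2 hUT'),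
      (hL _ haT).1 ((pathLE_image_succAbove_iff ha.1).2 hTL'), by rw [Finset.coe_image, image_comp]⟩

end HasBoundingPaths

/-! ### Minors -/

variable {M : Matroid α}

theorem dual (hM : LatticePath M) : LatticePath M✶ := by
  obtain ⟨n, g, L, U, h⟩ := hM.exists_hasBoundingPaths
  exact h.dual.latticePath

lemma finite_ground (hM : LatticePath M) : M.E.Finite := by
  obtain ⟨r, m, g, -, -, -, hgE, -⟩ := hM
  exact hgE ▸ (finite_Icc 1 (m + r)).image g

theorem delete_singleton (hM : LatticePath M) (e : α) : LatticePath (M ＼ {e}) := by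
  by_cases he : e ∈ M.E
  swap
  · rwa [delete_eq_self_iff.2 (disjoint_singleton_left.2 he)]
  wlog hcoind : M.Coindep {e} generalizing M
  · -- A coloop is a nonloop, so `{e}` is coindependent in `M✶`; and deleting it is contracting it.
    have hcol : M.IsColoop e := (not_isNonloop_iff (M := M✶) he).1 (indep_singleton.not.1 hcoind)
    rw [← contract_eq_delete_of_subset_coloops (singleton_subset_iff.2 hcol), ← dual_delete_dual]
    refine (this hM.dual he ?_).dual
    rw [Coindep, dual_dual]
    exact indep_singleton.2 hcol.isNonloop
  obtain ⟨n, g, L, U, h⟩ := hM.exists_hasBoundingPaths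
  obtain ⟨a, ha, rfl⟩ := h.image_eq ▸ he
  obtain ⟨L', U', h'⟩ := h.delete ha hcoind
  exact h'.latticePath

theorem delete (hM : LatticePath M) (D : Set α) : LatticePath (M ＼ D) := by
  rw [← delete_inter_ground_eq]
  have hD : (D ∩ M.E).Finite := hM.finite_ground.subset inter_subset_right
  generalize D ∩ M.E = D' at hD
  induction D', hD using Set.Finite.induction_on generalizing M with
  | empty => rwa [delete_empty]
  | @insert e D' _ _ ih =>
    rw [insert_eq, ← delete_delete]
    exact ih (hM.delete_singleton e)

theorem contract (hM : LatticePath M) (C : Set α) : LatticePath (M ／ C) := by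
  rw [← dual_delete_dual]
  exact (hM.dual.delete C).dual

end LatticePath

/-- The class of lattice path matroids is closed under minors. -/
theorem latticePath_of_isMinorOf (M N : Matroid α) (hM : LatticePath M)
    (hNM : IsMinorOf N M) : LatticePath N := by
  obtain ⟨C, D, -, -, -, rfl⟩ := hNM
  exact (hM.contract C).delete D
end

section
/- Let M be a rank-r lattice path matroid with ground set {1,…,r+m} and standard presentation 𝒩 = (N_1,…,N_r). If M is vertically 3-connected, then 𝒩 has the upper bound property, i.e., l_{k+2} ≤ u_k for all k ∈ {1,…,r−2}. -/
open Set Matroid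

variable {α : Type*}

/-- A standard presentation with interval endpoints `l i`, `u i` has the upper bound
property if `l (i+2) ≤ u i` for all valid indices `i`. -/
def UpperBoundProperty {r : ℕ} (l u : Fin r → ℕ) : Prop :=
  ∀ i k : Fin r, (k : ℕ) = (i : ℕ) + 2 → l k ≤ u i

/-!
If `l (i+2) > u i`, split the ground set at `u i` into `A = [1, u i]` and `B = (u i, m + r]`.
An element of `A` lies only in the intervals `N j` with `j ≤ i + 1`, and an element of `B` only
in those with `j > i`, so `r A + r B ≤ (i + 2) + (r - 1 - i) = r + 1`, while `r M = r` and
`r B = r - 1 - i ≥ 2`. This is a vertical 2-separation if `r A ≥ 2`, and a vertical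
1-separation if `r A = 1`.
-/

section Rank

variable {M : Matroid α} {X I : Set α}

theorem encard_le_eRk_of_indep (hI : M.Indep I) (hIX : I ⊆ X) : I.encard ≤ _root_.eRk M X :=
  le_iSup (fun J : {J : Set α // M.Indep J ∧ J ⊆ X} => (J : Set α).encard) ⟨I, hI, hIX⟩

theorem eRk_le_of_forall_indep {c : ℕ∞} (h : ∀ I, M.Indep I → I ⊆ X → I.encard ≤ c) :
    _root_.eRk M X ≤ c :=
  iSup_le fun J => h J J.2.1 J.2.2

theorem eRk_le_encard_self : _root_.eRk M X ≤ X.encard :=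
  eRk_le_of_forall_indep fun _ _ hIX => encard_le_encard hIX

theorem VerticallyThreeConnected.eRank_add_le (h : VerticallyThreeConnected M) {k : ℕ}
    (hk0 : 0 < k) (hk3 : k < 3) {A B : Set α} (hAB : A ∪ B = M.E) (hdisj : Disjoint A B)
    (hA : (k : ℕ∞) ≤ _root_.eRk M A) (hB : (k : ℕ∞) ≤ _root_.eRk M B) :
    _root_.eRank M + k ≤ _root_.eRk M A + _root_.eRk M B := by
  by_contra! hlt
  exact h k hk0 hk3 A B hAB hdisj
    ⟨hA.trans eRk_le_encard_self, hB.trans eRk_le_encard_self, hA, hB, hlt⟩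

end Rank

namespace IsTransversalPresentation

variable {M : Matroid α} {r : ℕ} {N : Fin r → Set α}

theorem indep_image (hN : IsTransversalPresentation M N) {g : Fin r → α} {J : Set (Fin r)}
    (hgN : ∀ j ∈ J, g j ∈ N j) : M.Indep (g '' J) := by
  refine (hN.2 _).2 ⟨?_, fun x => x.2.choose, fun x y hxy => ?_, fun x => ?_⟩
  · rintro _ ⟨j, hj, rfl⟩
    exact hN.1 j (hgN j hj)
  · exact Subtype.ext <| x.2.choose_spec.2.symm.trans <| (congrArg g hxy).trans y.2.choose_spec.2
  · simpa only [x.2.choose_spec.2] using hgN _ x.2.choose_spec.1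

theorem encard_le_eRk (hN : IsTransversalPresentation M N) {g : Fin r → α} {J : Set (Fin r)}
    {X : Set α} (hg : InjOn g J) (hgN : ∀ j ∈ J, g j ∈ N j) (hJX : g '' J ⊆ X) :
    J.encard ≤ _root_.eRk M X :=
  hg.encard_image ▸ encard_le_eRk_of_indep (hN.indep_image hgN) hJX

theorem eRk_le_encard (hN : IsTransversalPresentation M N) {X : Set α} {J : Set (Fin r)}
    (hJ : ∀ j, (N j ∩ X).Nonempty → j ∈ J) : _root_.eRk M X ≤ J.encard := by
  refine eRk_le_of_forall_indep fun I hI hIX => ?_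
  obtain ⟨-, φ, hφ, hφN⟩ := (hN.2 I).1 hI
  calc I.encard = (univ : Set I).encard := by
        rw [← Subtype.val_injective.encard_image, image_univ, Subtype.range_coe]
    _ ≤ J.encard := encard_le_encard_of_injOn (fun x _ => hJ _ ⟨x, hφN x, hIX x.2⟩) hφ.injOn

end IsTransversalPresentation

section IntervalPresentation

variable {M : Matroid α} {r : ℕ} {l u : Fin r → α} [Preorder α] {X : Set α}
  (hN : IsTransversalPresentation M fun j => Icc (l j) (u j))
include hN

theorem eRk_le_of_subset_Iic (hl : Monotone l) {t : α} {k : Fin r} (hk : ¬ l k ≤ t)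
    (hX : X ⊆ Iic t) : _root_.eRk M X ≤ (k : ℕ) := by
  rw [← Fin.card_Iio k, ← encard_coe_eq_coe_finsetCard, Finset.coe_Iio]
  refine hN.eRk_le_encard fun j ⟨x, hxN, hxX⟩ => ?_
  exact mem_Iio.2 <| lt_of_not_ge fun hkj => hk <| (hl hkj).trans (hxN.1.trans (hX hxX))

theorem eRk_le_of_subset_Ioi (hu : Monotone u) {i : Fin r} (hX : X ⊆ Ioi (u i)) :
    _root_.eRk M X ≤ (r - 1 - i : ℕ) := by
  rw [← Fin.card_Ioi i, ← encard_coe_eq_coe_finsetCard, Finset.coe_Ioi]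
  refine hN.eRk_le_encard fun j ⟨x, hxN, hxX⟩ => ?_
  exact mem_Ioi.2 <| lt_of_not_ge fun hji => not_le_of_gt (hX hxX) ((hxN.2.trans (hu hji)))

end IntervalPresentation

namespace IsStandardPresentation

variable {M : Matroid ℕ} {m r : ℕ} {l u : Fin r → ℕ} (hM : IsStandardPresentation M m l u)
include hM

theorem isTransversalPresentation : IsTransversalPresentation M fun j => Icc (l j) (u j) :=
  hM.2.2.2.2

theorem strictMono_lower : StrictMono l := hM.2.1

theorem strictMono_upper : StrictMono u := hM.2.2.1

theorem lower_mem_Icc (j : Fin r) : l j ∈ Icc (l j) (u j) := left_mem_Icc.2 (hM.2.2.2.1 j).2.1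

theorem upper_mem_Icc (j : Fin r) : u j ∈ Icc (l j) (u j) := right_mem_Icc.2 (hM.2.2.2.1 j).2.1

theorem upper_mem_ground (j : Fin r) : u j ∈ M.E :=
  hM.isTransversalPresentation.1 j (hM.upper_mem_Icc j)

theorem natCast_le_eRank : (r : ℕ∞) ≤ _root_.eRank M := by
  unfold _root_.eRank
  simpa using hM.isTransversalPresentation.encard_le_eRk (g := l) (J := univ)
    hM.strictMono_lower.injective.injOn (fun j _ => hM.lower_mem_Icc j)
    fun _ ⟨j, _, hj⟩ => hj ▸ hM.isTransversalPresentation.1 j (hM.lower_mem_Icc j)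

theorem one_le_eRk_inter_Iic (i : Fin r) : 1 ≤ _root_.eRk M (M.E ∩ Iic (u i)) := by
  simpa using hM.isTransversalPresentation.encard_le_eRk (g := u) (J := {i})
    (injOn_singleton u i) (fun j _ => hM.upper_mem_Icc j) (by
      rw [image_singleton, singleton_subset_iff]
      exact ⟨hM.upper_mem_ground i, mem_Iic.2 le_rfl⟩)

theorem le_eRk_inter_Ioi (i : Fin r) :
    ((r - 1 - i : ℕ) : ℕ∞) ≤ _root_.eRk M (M.E ∩ Ioi (u i)) := by
  rw [← Fin.card_Ioi i, ← encard_coe_eq_coe_finsetCard, Finset.coe_Ioi]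
  refine hM.isTransversalPresentation.encard_le_eRk hM.strictMono_upper.injective.injOn
    (fun j _ => hM.upper_mem_Icc j) ?_
  rintro _ ⟨j, hj, rfl⟩
  exact ⟨hM.upper_mem_ground j, hM.strictMono_upper hj⟩

end IsStandardPresentation

/-- If a lattice path matroid with standard presentation `𝒩` is vertically 3-connected,
then `𝒩` has the upper bound property. -/
theorem upperBoundProperty_of_verticallyThreeConnected (M : Matroid ℕ) (m : ℕ) {r : ℕ}
    (l u : Fin r → ℕ) (hM : IsStandardPresentation M m l u)
    (h3 : VerticallyThreeConnected M) : UpperBoundProperty l u := by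
  intro i k hk
  by_contra hlu
  have hN := hM.isTransversalPresentation
  have hir : (i : ℕ) + 2 < r := hk ▸ k.isLt
  set A := M.E ∩ Iic (u i)
  set B := M.E ∩ Ioi (u i)
  have hAB : A ∪ B = M.E := by rw [← inter_union_distrib_left, Iic_union_Ioi, inter_univ]
  have hdisj : Disjoint A B :=
    (Iic_disjoint_Ioi le_rfl).mono inter_subset_right inter_subset_right
  have hA_le : _root_.eRk M A ≤ (k : ℕ) :=
    eRk_le_of_subset_Iic hN hM.strictMono_lower.monotone hlu inter_subset_right
  have hB_le : _root_.eRk M B ≤ (r - 1 - i : ℕ) :=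
    eRk_le_of_subset_Ioi hN hM.strictMono_upper.monotone inter_subset_right
  have hB_ge : (2 : ℕ∞) ≤ _root_.eRk M B :=
    le_trans (by exact_mod_cast (by omega : 2 ≤ r - 1 - (i : ℕ))) (hM.le_eRk_inter_Ioi i)
  rcases le_or_gt 2 (_root_.eRk M A) with hA2 | hA1
  · have hsep : (r : ℕ∞) + (2 : ℕ) ≤ (k : ℕ) + (r - 1 - i : ℕ) :=
      (add_le_add_left hM.natCast_le_eRank _).trans <|
        (h3.eRank_add_le two_pos (by norm_num) hAB hdisj hA2 hB_ge).trans (add_le_add hA_le hB_le)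
    norm_cast at hsep
    omega
  · have hsep : (r : ℕ∞) + (1 : ℕ) ≤ (1 : ℕ) + (r - 1 - i : ℕ) :=
      (add_le_add_left hM.natCast_le_eRank _).trans <|
        (h3.eRank_add_le one_pos (by norm_num) hAB hdisj
          (by exact_mod_cast hM.one_le_eRk_inter_Iic i) (one_le_two.trans hB_ge)).trans
          (add_le_add (Order.le_of_lt_add_one hA1) hB_le)
    norm_cast at hsep
    omega
end

section
/- For every n ≥ 4, the matroid A_n has exactly two distinct n-element circuits, these two circuits intersect in exactly one element f, and the deletion A_n \ f is isomorphic to the uniform matroid U_{n,2n−1}. -/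
open Set Matroid

variable {α : Type*}

/-!
All matroids in the construction of `A_n` are uniform matroids `U_{r,m}` in which a few `r`-sets,
pairwise meeting in at most `r - 2` elements, have been declared dependent (sparse paving
matroids). `P_k` is `U_{k,2k}` with the two blocks `E₁`, `E₂` made dependent. Dualising replaces
each exceptional set by its complement, while a free extension keeps them; hence `P_k` is
self-dual, `P'_n` is `U_{n,2n-1}` with exceptional sets `e + E₁`, `e + E₂`, and `A_n` is `U_{n,2n}`
with the same two exceptional sets, which meet exactly in `e`. In such a matroid the exceptional
sets are exactly the circuits of size `r`, and deleting `e`, which lies in both, leaves a uniform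
matroid.
-/

lemma eRank_eq_matroid_eRank (M : Matroid α) : _root_.eRank M = M.eRank := by
  refine le_antisymm (iSup_le fun I => I.2.1.encard_le_eRank) ?_
  obtain ⟨B, hB⟩ := M.exists_isBase
  rw [← hB.encard_eq_eRank]
  exact le_iSup (fun I : {I : Set α // M.Indep I ∧ I ⊆ M.E} => (I : Set α).encard)
    ⟨B, hB.indep, hB.subset_ground⟩

/-- Two `r`-subsets of an `(r + 1)`-set share `r - 1` elements, so they cannot both lie in `H`. -/
lemma exists_subset_encard_eq_notMem {S : Set α} {r : ℕ} {H : Set (Set α)} (hr : 0 < r)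
    (hH : H.Pairwise fun h₁ h₂ => (h₁ ∩ h₂).encard + 2 ≤ r) (hS : r < S.encard) :
    ∃ B ⊆ S, B.encard = r ∧ B ∉ H := by
  obtain ⟨T, hTS, hT⟩ := exists_subset_encard_eq (Order.add_one_le_of_lt hS)
  obtain ⟨a, b, ha, hb, hab⟩ := one_lt_encard_iff.1 (by rw [hT]; exact_mod_cast Nat.succ_lt_succ hr)
  have hcard : ∀ c ∈ T, (T \ {c}).encard = r := fun c hc =>
    ENat.add_left_injective_of_ne_top ENat.one_ne_top
      (show (T \ {c}).encard + 1 = r + 1 by rw [encard_sdiff_singleton_add_one hc, hT])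
  by_contra! hall
  have hmem : ∀ c ∈ T, T \ {c} ∈ H := fun c hc =>
    hall _ (sdiff_subset.trans hTS) (hcard c hc)
  have hne : T \ {a} ≠ T \ {b} := fun h => (h ▸ (show b ∈ T \ {a} from ⟨hb, hab.symm⟩)).2 rfl
  have hinter : T \ {a} ∩ (T \ {b}) = T \ {a, b} := by
    ext
    simp only [mem_inter_iff, mem_sdiff, mem_insert_iff, mem_singleton_iff]
    tauto
  have hsplit := encard_sdiff_add_encard_of_subset (pair_subset ha hb)
  rw [encard_pair hab, hT, ← hinter] at hsplit
  have : (T \ {a} ∩ (T \ {b})).encard + 2 ≤ r := hH (hmem a ha) (hmem b hb) hne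
  rw [hsplit] at this
  norm_cast at this
  omega

lemma pairwise_pair_of_encard_inter_add_two_le {A B : Set α} {r : ℕ}
    (h : (A ∩ B).encard + 2 ≤ r) :
    ({A, B} : Set (Set α)).Pairwise fun h₁ h₂ => (h₁ ∩ h₂).encard + 2 ≤ r :=
  pairwise_pair.2 fun _ => ⟨h, by rwa [inter_comm]⟩

/-- When the members of `H` are `r`-sets pairwise meeting in at most `r - 2` elements, this says
that `M` is the sparse paving matroid of rank `r` with circuit-hyperplanes the members of `H`. -/
def IsUniformExcept (M : Matroid α) (r : ℕ) (H : Set (Set α)) : Prop :=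
  ∀ I, M.Indep I ↔ I ⊆ M.E ∧ I.encard ≤ r ∧ I ∉ H

namespace IsUniformExcept

variable {M : Matroid α} {r : ℕ} {H : Set (Set α)}

lemma eRank_eq (hM : IsUniformExcept M r H) (hr : 0 < r)
    (hH : H.Pairwise fun h₁ h₂ => (h₁ ∩ h₂).encard + 2 ≤ r) (hrE : r < M.E.encard) :
    M.eRank = r := by
  obtain ⟨B₀, hB₀E, hB₀r, hB₀H⟩ := exists_subset_encard_eq_notMem hr hH hrE
  obtain ⟨B, hB⟩ := M.exists_isBase
  refine le_antisymm ?_ ?_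
  · rw [← hB.encard_eq_eRank]
    exact ((hM B).1 hB.indep).2.1
  · rw [← hB₀r]
    exact ((hM B₀).2 ⟨hB₀E, hB₀r.le, hB₀H⟩).encard_le_eRank

lemma isBase_iff (hM : IsUniformExcept M r H) (hr : 0 < r)
    (hH : H.Pairwise fun h₁ h₂ => (h₁ ∩ h₂).encard + 2 ≤ r) (hrE : r < M.E.encard) {B : Set α} :
    M.IsBase B ↔ B ⊆ M.E ∧ B.encard = r ∧ B ∉ H := by
  have hrank := hM.eRank_eq hr hH hrE
  refine ⟨fun hB => ?_, fun ⟨hBE, hBr, hBH⟩ => ?_⟩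
  · obtain ⟨hBE, -, hBH⟩ := (hM B).1 hB.indep
    exact ⟨hBE, hB.encard_eq_eRank.trans hrank, hBH⟩
  · have hB := (hM B).2 ⟨hBE, hBr.le, hBH⟩
    refine hB.isBase_of_eRk_ge (finite_of_encard_eq_coe hBr) ?_
    rw [hrank, hB.eRk_eq_encard, hBr]

lemma dual {s : ℕ} (hM : IsUniformExcept M r H) (hr : 0 < r) (hs : 0 < s)
    (hH : H.Pairwise fun h₁ h₂ => (h₁ ∩ h₂).encard + 2 ≤ r)
    (hHE : ∀ h ∈ H, h ⊆ M.E ∧ h.encard = r) (hE : M.E.encard = r + s) :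
    IsUniformExcept M✶ s ((M.E \ ·) '' H) := by
  have hrE : (r : ℕ∞) < M.E.encard := by rw [hE]; exact_mod_cast Nat.lt_add_of_pos_right hs
  intro I
  rw [dual_indep_iff_exists', dual_ground]
  refine and_congr_right fun hIE => ?_
  have hmem : I ∈ (M.E \ ·) '' H ↔ M.E \ I ∈ H :=
    ⟨by rintro ⟨h, hh, rfl⟩; rwa [sdiff_sdiff_cancel_left (hHE h hh).1],
      fun h => ⟨_, h, sdiff_sdiff_cancel_left hIE⟩⟩
  have hEfin : M.E.Finite := finite_of_encard_eq_coe (hE.trans (by norm_cast))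
  obtain ⟨i, hi⟩ := (hEfin.subset hIE).exists_encard_eq_coe
  obtain ⟨j, hj⟩ := (hEfin.subset (sdiff_subset (t := I))).exists_encard_eq_coe
  have hsplit : j + i = r + s := by
    have := encard_sdiff_add_encard_of_subset hIE
    rw [hE, hi, hj] at this
    exact_mod_cast this
  simp_rw [hmem, hM.isBase_iff hr hH hrE, hi]
  constructor
  · rintro ⟨B, ⟨hBE, hBr, hBH⟩, hIB⟩
    have hBsub : B ⊆ M.E \ I := subset_sdiff.2 ⟨hBE, hIB.symm⟩
    have hrj : r ≤ j := by
      have := encard_le_encard hBsub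
      rw [hBr, hj] at this
      exact_mod_cast this
    refine ⟨by exact_mod_cast (by omega : i ≤ s), fun hIH => hBH ?_⟩
    rwa [hEfin.sdiff.eq_of_subset_of_encard_le' hBsub (by rw [hBr, (hHE _ hIH).2])]
  · rintro ⟨his, hIH⟩
    have hrj : r ≤ j := by
      have : i ≤ s := by exact_mod_cast his
      omega
    obtain ⟨B, hBsub, hBr, hBH⟩ : ∃ B ⊆ M.E \ I, B.encard = r ∧ B ∉ H := by
      rcases hrj.eq_or_lt with hrj | hrj
      · exact ⟨M.E \ I, subset_rfl, by rw [hj, hrj], hIH⟩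
      · exact exists_subset_encard_eq_notMem hr hH (by rw [hj]; exact_mod_cast hrj)
    exact ⟨B, ⟨hBsub.trans sdiff_subset, hBr, hBH⟩, disjoint_sdiff_right.mono_right hBsub⟩

lemma of_isFreeExtOf {M₀ : Matroid α} {x : α} (hM₀ : IsUniformExcept M₀ r H)
    (hHE : ∀ h ∈ H, h ⊆ M₀.E ∧ h.encard = r) (hrank : M₀.eRank = r)
    (hM : IsFreeExtOf M₀ M x) : IsUniformExcept M r H := by
  obtain ⟨hx, hME, hMi⟩ := hM
  intro I
  rw [hMi, hME, eRank_eq_matroid_eRank, hrank, hM₀ I, hM₀ (I \ {x})]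
  by_cases hxI : x ∈ I
  · have hcard := encard_sdiff_singleton_add_one hxI
    have hxH : I ∉ H := fun h => hx ((hHE I h).1 hxI)
    simp only [hxI, not_true_eq_false, false_and, false_or, true_and, hcard,
      sdiff_singleton_subset_iff]
    refine ⟨fun ⟨⟨hIE, _, _⟩, hIr⟩ => ⟨hIE, hIr, hxH⟩, fun ⟨hIE, hIr, _⟩ => ?_⟩
    refine ⟨⟨hIE, (encard_le_encard sdiff_subset).trans hIr, fun h => ?_⟩, hIr⟩
    rw [← hcard, (hHE _ h).2] at hIr
    norm_cast at hIr
    omega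
  · simp only [hxI, not_false_eq_true, true_and, false_and, or_false,
      subset_insert_iff_of_notMem hxI]

lemma isCircuit_of_mem (hM : IsUniformExcept M r H) (hHE : ∀ h ∈ H, h ⊆ M.E ∧ h.encard = r)
    {C : Set α} (hC : C ∈ H) : _root_.IsCircuit M C := by
  obtain ⟨hCE, hCr⟩ := hHE C hC
  refine ⟨⟨fun hi => ((hM C).1 hi).2.2 hC, hCE⟩, fun D hDC => (hM D).2 ?_⟩
  have hlt : D.encard < r :=
    hCr ▸ ((finite_of_encard_eq_coe hCr).subset hDC.subset).encard_lt_encard hDC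
  exact ⟨hDC.subset.trans hCE, hlt.le, fun hD => hlt.ne (hHE D hD).2⟩

lemma mem_of_dep (hM : IsUniformExcept M r H) {C : Set α} (hC : M.Dep C)
    (hCr : C.encard ≤ r) : C ∈ H := by
  by_contra h
  exact hC.not_indep ((hM C).2 ⟨hC.subset_ground, hCr, h⟩)

lemma isUnifIso_mdel (hM : IsUniformExcept M r H) {D : Set α} (hD : ∀ h ∈ H, (h ∩ D).Nonempty)
    {m : ℕ} (hm : (M.E \ D).encard = m) : IsUnifIso r m (MDel M D) := by
  refine ⟨hm, fun I => ?_⟩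
  rw [MDel, restrict_indep_iff, restrict_ground_eq, hM]
  refine ⟨fun ⟨⟨_, hIr, _⟩, hID⟩ => ⟨hID, hIr⟩, fun ⟨hID, hIr⟩ => ⟨⟨hID.trans sdiff_subset, hIr,
    fun hIH => ?_⟩, hID⟩⟩
  obtain ⟨y, hyI, hyD⟩ := hD I hIH
  exact (hID hyI).2 hyD

end IsUniformExcept

lemma encard_inter_le_pred_iff_ne {I E : Set α} {k : ℕ} (hE : E.encard = k) (hI : I.encard ≤ k)
    (hk : 0 < k) : (I ∩ E).encard ≤ (k - 1 : ℕ) ↔ I ≠ E := by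
  have hpred : ((k - 1 : ℕ) : ℕ∞) + 1 = k := by norm_cast; omega
  rw [← ENat.lt_add_one_iff (ENat.natCast_ne_top _), hpred, ← hE]
  refine ⟨by rintro hlt rfl; exact hlt.ne (by rw [inter_self]), fun hne => ?_⟩
  refine (encard_le_encard inter_subset_right).lt_of_ne fun heq => hne ?_
  have hIE : I ∩ E = E :=
    (finite_of_encard_eq_coe hE).eq_of_subset_of_encard_le' inter_subset_right heq.ge
  exact ((finite_of_encard_le_coe hI).eq_of_subset_of_encard_le' (hIE ▸ inter_subset_left)
    (hI.trans hE.ge)).symm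

lemma IsP.exists_isUniformExcept {k : ℕ} {P : Matroid α} (hk : 0 < k) (hP : IsP k P) :
    ∃ E₁ E₂ : Set α, Disjoint E₁ E₂ ∧ E₁.encard = k ∧ E₂.encard = k ∧ P.E = E₁ ∪ E₂ ∧
      IsUniformExcept P k {E₁, E₂} := by
  obtain ⟨M₁, M₂, M₀, ⟨h₁, hI₁⟩, ⟨h₂, hI₂⟩, ⟨hdisj, hM₀E, hM₀I⟩, -, hPE, hPI⟩ := hP
  refine ⟨M₁.E, M₂.E, hdisj, h₁, h₂, hPE.trans hM₀E, fun I => ?_⟩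
  rw [hPI, hM₀I, hI₁, hI₂, hPE, hM₀E]
  simp only [mem_insert_iff, mem_singleton_iff, not_or, inter_subset_right, true_and]
  constructor
  · rintro ⟨⟨hIE, h₁I, h₂I⟩, hIk⟩
    exact ⟨hIE, hIk, (encard_inter_le_pred_iff_ne h₁ hIk hk).1 h₁I,
      (encard_inter_le_pred_iff_ne h₂ hIk hk).1 h₂I⟩
  · rintro ⟨hIE, hIk, h₁I, h₂I⟩
    exact ⟨⟨hIE, (encard_inter_le_pred_iff_ne h₁ hIk hk).2 h₁I,
      (encard_inter_le_pred_iff_ne h₂ hIk hk).2 h₂I⟩, hIk⟩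

lemma IsP'.exists_isUniformExcept {k : ℕ} {N : Matroid α} (hk : 2 ≤ k) (hN : IsP' (k + 1) N) :
    ∃ (e : α) (C₁ C₂ : Set α), C₁ ∩ C₂ = {e} ∧ C₁.encard = ((k + 1 : ℕ) : ℕ∞) ∧
      C₂.encard = ((k + 1 : ℕ) : ℕ∞) ∧ N.E = C₁ ∪ C₂ ∧ IsUniformExcept N (k + 1) {C₁, C₂} := by
  obtain ⟨P, e, hP, hext⟩ := hN
  rw [Nat.add_sub_cancel] at hP
  obtain ⟨E₁, E₂, hdisj, h₁, h₂, hPE, hPU⟩ := hP.exists_isUniformExcept (by omega)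
  have hsparse : ∀ {A B : Set α}, Disjoint A B →
      ({A, B} : Set (Set α)).Pairwise fun h₁ h₂ => (h₁ ∩ h₂).encard + 2 ≤ k := fun hAB =>
    pairwise_pair_of_encard_inter_add_two_le
      (by rw [hAB.inter_eq, encard_empty]; exact_mod_cast hk)
  have hblocks : ∀ h ∈ ({E₂, E₁} : Set (Set α)), h ⊆ E₁ ∪ E₂ ∧ h.encard = k := by
    rintro _ (rfl | rfl)
    exacts [⟨subset_union_right, h₂⟩, ⟨subset_union_left, h₁⟩]
  have hPd : IsUniformExcept P✶ k {E₂, E₁} := by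
    have := hPU.dual (s := k) (by omega) (by omega) (hsparse hdisj)
      (by rw [pair_comm, hPE]; exact hblocks) (by rw [hPE, encard_union_eq hdisj, h₁, h₂])
    rwa [image_pair, hPE, union_sdiff_cancel_left hdisj.inter_eq.subset,
      union_sdiff_cancel_right hdisj.inter_eq.subset] at this
  have he : e ∉ E₁ ∪ E₂ := hPE ▸ hext.1
  have hNdE : N✶.E = insert e (E₁ ∪ E₂) := hext.2.1.trans (by rw [dual_ground, hPE])
  have hNd : IsUniformExcept N✶ k {E₂, E₁} :=
    hPd.of_isFreeExtOf (by rwa [dual_ground, hPE])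
      (hPd.eRank_eq (by omega) (hsparse hdisj.symm) (by
        rw [dual_ground, hPE, encard_union_eq hdisj, h₁, h₂]
        exact_mod_cast (by omega : k < k + k))) hext
  have hNU := hNd.dual (s := k + 1) (by omega) (by omega) (hsparse hdisj.symm)
    (by rw [hNdE]; exact fun h hh => ⟨(hblocks h hh).1.trans (subset_insert _ _), (hblocks h hh).2⟩)
    (by rw [hNdE, encard_insert_of_notMem he, encard_union_eq hdisj, h₁, h₂]; push_cast; ring)
  rw [dual_dual, image_pair, hNdE, insert_sdiff_of_notMem _ (fun h => he (Or.inr h)),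
    insert_sdiff_of_notMem _ (fun h => he (Or.inl h)),
    union_sdiff_cancel_left hdisj.inter_eq.subset, union_sdiff_cancel_right hdisj.inter_eq.subset]
    at hNU
  refine ⟨e, insert e E₁, insert e E₂, ?_, ?_, ?_, ?_, hNU⟩
  · rw [← insert_inter_distrib, hdisj.inter_eq, insert_empty_eq]
  · rw [encard_insert_of_notMem (fun h => he (Or.inl h)), h₁]; norm_cast
  · rw [encard_insert_of_notMem (fun h => he (Or.inr h)), h₂]; norm_cast
  · rw [← insert_union_distrib, ← hNdE, dual_ground]

lemma IsA.exists_isUniformExcept {n : ℕ} {M : Matroid α} (hn : 3 ≤ n) (hM : IsA n M) :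
    ∃ (e : α) (C₁ C₂ : Set α), C₁ ∩ C₂ = {e} ∧ C₁.encard = n ∧ C₂.encard = n ∧
      C₁ ∪ C₂ ⊆ M.E ∧ (M.E \ {e}).encard = (2 * n - 1 : ℕ) ∧ IsUniformExcept M n {C₁, C₂} := by
  obtain ⟨k, rfl⟩ : ∃ k, n = k + 1 := ⟨n - 1, by omega⟩
  obtain ⟨N, x, hN, hext⟩ := hM
  obtain ⟨e, C₁, C₂, hC, h₁, h₂, hNE, hNU⟩ := hN.exists_isUniformExcept (by omega)
  have hNcard : N.E.encard = (2 * k + 1 : ℕ) := by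
    have := encard_union_add_encard_inter C₁ C₂
    rw [hC, encard_singleton, h₁, h₂, ← hNE] at this
    exact ENat.add_left_injective_of_ne_top ENat.one_ne_top (this.trans (by push_cast; ring))
  have hcircuits : ∀ h ∈ ({C₁, C₂} : Set (Set α)), h ⊆ N.E ∧ h.encard = (k + 1 : ℕ) := by
    rintro _ (rfl | rfl)
    exacts [⟨hNE ▸ subset_union_left, h₁⟩, ⟨hNE ▸ subset_union_right, h₂⟩]
  have hrank : N.eRank = (k + 1 : ℕ) :=
    hNU.eRank_eq (by omega)
      (pairwise_pair_of_encard_inter_add_two_le (by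
        rw [hC, encard_singleton]
        exact_mod_cast (by omega : 1 + 2 ≤ k + 1)))
      (by rw [hNcard]; norm_cast; omega)
  have hMU := hNU.of_isFreeExtOf hcircuits hrank hext
  obtain ⟨hx, hME, -⟩ := hext
  have he : e ∈ N.E := hNE ▸ Or.inl (hC.symm ▸ mem_singleton e : e ∈ C₁ ∩ C₂).1
  refine ⟨e, C₁, C₂, hC, h₁, h₂, hME ▸ hNE ▸ subset_insert _ _, ?_, hMU⟩
  have hxe : x ∉ ({e} : Set α) := fun h => hx (mem_singleton_iff.1 h ▸ he)
  rw [hME, insert_sdiff_of_notMem _ hxe,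
    encard_insert_of_notMem (fun h => hx h.1), encard_sdiff_singleton_add_one he, hNcard]
  congr 1

/-- For every `n ≥ 4`, the matroid `A_n` has exactly two distinct `n`-element circuits,
these two circuits intersect in exactly one element `f`, and the deletion `A_n \ f` is
isomorphic to the uniform matroid `U_{n, 2n-1}`. -/
theorem isA_two_circuits (n : ℕ) (hn : 4 ≤ n) (M : Matroid α) (hM : IsA n M) :
    ∃ C₁ C₂ : Set α, C₁ ≠ C₂ ∧
      _root_.IsCircuit M C₁ ∧ C₁.encard = (n : ℕ∞) ∧ _root_.IsCircuit M C₂ ∧ C₂.encard = (n : ℕ∞) ∧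
      (∀ C : Set α, _root_.IsCircuit M C → C.encard = (n : ℕ∞) → C = C₁ ∨ C = C₂) ∧
      ∃ f : α, C₁ ∩ C₂ = {f} ∧ IsUnifIso n (2 * n - 1) (MDel M {f}) := by
  obtain ⟨e, C₁, C₂, hC, h₁, h₂, hCE, hdel, hMU⟩ := hM.exists_isUniformExcept (by omega)
  have hcircuits : ∀ C ∈ ({C₁, C₂} : Set (Set α)), C ⊆ M.E ∧ C.encard = n := by
    rintro _ (rfl | rfl)
    exacts [⟨subset_union_left.trans hCE, h₁⟩, ⟨subset_union_right.trans hCE, h₂⟩]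
  have heC : ∀ C ∈ ({C₁, C₂} : Set (Set α)), (C ∩ {e}).Nonempty := by
    have he : e ∈ C₁ ∩ C₂ := hC.symm ▸ mem_singleton e
    rintro _ (rfl | rfl)
    exacts [⟨e, he.1, rfl⟩, ⟨e, he.2, rfl⟩]
  refine ⟨C₁, C₂, fun h => ?_, hMU.isCircuit_of_mem hcircuits (mem_insert _ _), h₁,
    hMU.isCircuit_of_mem hcircuits (mem_insert_of_mem _ rfl), h₂,
    fun C hC hCn => hMU.mem_of_dep hC.1 hCn.le, e, hC, hMU.isUnifIso_mdel heC hdel⟩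
  rw [h, inter_self] at hC
  rw [hC, encard_singleton] at h₂
  norm_cast at h₂
  omega
end
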